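/- Under the identification of the edge space ℓ₁(E(D_n)) of the binary diamond graph D_n with span({h₀} ∪ ⋃_{k=0}^{2n−1} H_k) ⊂ L¹[0,1] (edge i of D_n ↦ 4ⁿ·1_{((i−1)/4ⁿ, i/4ⁿ]}), the cycle space Z(D_n) corresponds exactly to span(⋃_{k=0}^{n−1} H_{2k}), the span of the even levels of the Haar system. -/

import Mathlib

open Finset

/-- Edge set of the `n`-th binary diamond graph: each edge spawns 4 edges. -/
def DE : ℕ → Type
  | 0 => Unit
  | n + 1 => DE n × Fin 4

/-- Vertex set of the `n`-th binary diamond graph: two new vertices per old edge. -/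
def DV : ℕ → Type
  | 0 => Fin 2
  | n + 1 => DV n ⊕ DE n × Fin 2

def deDecEq : ∀ n, DecidableEq (DE n)
  | 0 => inferInstanceAs (DecidableEq Unit)
  | n + 1 => letI := deDecEq n; inferInstanceAs (DecidableEq (DE n × Fin 4))

instance (n : ℕ) : DecidableEq (DE n) := deDecEq n

def deFintype : ∀ n, Fintype (DE n)
  | 0 => inferInstanceAs (Fintype Unit)
  | n + 1 => letI := deFintype n; inferInstanceAs (Fintype (DE n × Fin 4))

instance (n : ℕ) : Fintype (DE n) := deFintype n

def dvDecEq : ∀ n, DecidableEq (DV n)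
  | 0 => inferInstanceAs (DecidableEq (Fin 2))
  | n + 1 => letI := dvDecEq n; letI := deDecEq n
              inferInstanceAs (DecidableEq (DV n ⊕ DE n × Fin 2))

instance (n : ℕ) : DecidableEq (DV n) := dvDecEq n

def dvFintype : ∀ n, Fintype (DV n)
  | 0 => inferInstanceAs (Fintype (Fin 2))
  | n + 1 => letI := dvFintype n; letI := deFintype n
              inferInstanceAs (Fintype (DV n ⊕ DE n × Fin 2))

instance (n : ℕ) : Fintype (DV n) := dvFintype n

/-- Endpoints of the edges of the diamond graph `D_n`; each edge `e = (u,v)`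
(`u` the endpoint nearer the top) of `D_{n-1}` is replaced by the quadrilateral
`u, a, v, b` with edges `u a`, `a v`, `b v`, `u b`, each oriented downwards
(first coordinate nearer the top). `D_0` is a single edge `(0,1)` (`0` the top). -/
def ends : ∀ n, DE n → DV n × DV n
  | 0, _ => ((0 : Fin 2), (1 : Fin 2))
  | n + 1, (e, i) =>
      let u : DV (n + 1) := Sum.inl (ends n e).1
      let v : DV (n + 1) := Sum.inl (ends n e).2
      let a : DV (n + 1) := Sum.inr (e, (0 : Fin 2))
      let b : DV (n + 1) := Sum.inr (e, (1 : Fin 2))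
      if i.val = 0 then (u, a)
      else if i.val = 1 then (a, v)
      else if i.val = 2 then (b, v)
      else (u, b)

/-- The `n`-th binary diamond graph `D_n` (as an undirected simple graph). -/
def DG (n : ℕ) : SimpleGraph (DV n) where
  Adj x y := x ≠ y ∧ ∃ e : DE n, ends n e = (x, y) ∨ ends n e = (y, x)
  symm := by
    constructor
    intro x y h
    obtain ⟨hxy, e, he⟩ := h
    exact ⟨hxy.symm, e, he.symm⟩
  loopless := by
    constructor
    intro x h
    exact h.1 rfl

/-- The cycle space `Z(D_n)` of the diamond graph: the space of circulations, i.e. the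
kernel of the boundary operator. Over `ℝ` this is exactly the linear span of the signed
indicator functions of the cycles of `D_n` (w.r.t. the orientation given by `ends`). -/
def cycleSpace (n : ℕ) : Submodule ℝ (DE n → ℝ) where
  carrier := {f | ∀ v : DV n,
    ∑ e : DE n, f e * ((if (ends n e).2 = v then (1 : ℝ) else 0) -
      (if (ends n e).1 = v then (1 : ℝ) else 0)) = 0}
  add_mem' := by
    intro a b ha hb
    intro v
    simp only [Pi.add_apply, add_mul]
    rw [Finset.sum_add_distrib, ha v, hb v]
    ring
  zero_mem' := by
    intro v
    simp
  smul_mem' := by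
    intro c a ha
    intro v
    simp only [Pi.smul_apply, smul_eq_mul, mul_assoc]
    rw [← Finset.mul_sum, ha v, mul_zero]

/-- The `ℓ₁(E(D_n))` norm on the edge space. -/
def e1norm {n : ℕ} (f : DE n → ℝ) : ℝ := ∑ e, |f e|

open Classical in
/-- The Haar system on `(0,1]`: `h₀ = 1_{(0,1]}`, and for `i = 2^m + j` (`0 ≤ j < 2^m`),
`h_i = 1_{(j/2^m,(2j+1)/2^{m+1}]} - 1_{((2j+1)/2^{m+1},(j+1)/2^m]}`. -/
noncomputable def haar (i : ℕ) (t : ℝ) : ℝ :=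
  if i = 0 then (if 0 < t ∧ t ≤ 1 then 1 else 0)
  else
    let m := Nat.log2 i
    let j : ℝ := ((i - 2 ^ m : ℕ) : ℝ)
    if j / 2 ^ m < t ∧ t ≤ (2 * j + 1) / 2 ^ (m + 1) then 1
    else if (2 * j + 1) / 2 ^ (m + 1) < t ∧ t ≤ (j + 1) / 2 ^ m then -1
    else 0

/-- The `k`-th level of the Haar system: `H_k = {h_i : 2^k ≤ i < 2^{k+1}}`. -/
def haarLevel (k : ℕ) : Set (ℝ → ℝ) := haar '' Set.Ico (2 ^ k) (2 ^ (k + 1))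

/-- The `L²[0,1]` inner product. -/
noncomputable def L2inner (f g : ℝ → ℝ) : ℝ := ∫ t in (0:ℝ)..1, f t * g t

/-- The `L¹[0,1]` norm. -/
noncomputable def L1normI (f : ℝ → ℝ) : ℝ := ∫ t in (0:ℝ)..1, |f t|

/-- Left endpoint of the interval of length `4⁻ⁿ` associated to an edge of `D_n` under
the recursive identification of `ℓ₁(E(D_n))` with a subspace of `L¹[0,1]` (the four
edges replacing an edge occupy the four quarters of its interval, in order). -/
noncomputable def lep : ∀ n, DE n → ℝ
  | 0, _ => 0
  | n + 1, (e, i) => lep n e + (i.val : ℝ) / 4 ^ (n + 1)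

open Classical in
/-- The identification of the edge space `ℓ₁(E(D_n))` with
`span({h₀} ∪ ⋃_{k<2n} H_k) ⊂ L¹[0,1]`: the edge with interval `(a, a+4⁻ⁿ]` is sent to
`4ⁿ·1_{(a,a+4⁻ⁿ]}`. -/
noncomputable def emb (n : ℕ) (f : DE n → ℝ) : ℝ → ℝ := fun t =>
  ∑ e : DE n, f e * (4 ^ n * if lep n e < t ∧ t ≤ lep n e + 1 / 4 ^ n then 1 else 0)

/-!
A circulation on `D_{n+1}` is conserved at the two midpoints `a`, `b` of the diamond replacing an
edge `e` of `D_n`, so the two edges of each side of the diamond carry equal flow. Hence every cycle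
of `D_{n+1}` is the refinement of a cycle of `D_n` (each of the four new edges carrying a quarter of
the flow of `e`) plus a combination of the elementary cycles `(u a v) - (u b v)` of the diamonds.
The embedding does not see the refinement, and it sends the elementary cycle of `e` to a multiple of
the Haar function of level `2n` supported on the interval of `e`, because the side `u a v` occupies
the first half of that interval. Induction on `n` adds one even level at each step.
-/

noncomputable def iocIndicator (a ℓ t : ℝ) : ℝ := if a < t ∧ t ≤ a + ℓ then 1 else 0

-- `+1` on the side `u a v` of a diamond (edges `0, 1`, the first half of its interval), `-1` on
-- the side `u b v`.
def pathSign (i : Fin 4) : ℝ := if (i : ℕ) < 2 then 1 else -1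

lemma iocIndicator_eq_sum_quarters {N : ℝ} (hN : 0 < N) (a t : ℝ) :
    iocIndicator a (4 / N) t = ∑ i : Fin 4, iocIndicator (a + i / N) (1 / N) t := by
  have : 0 < 1 / N := by positivity
  simp only [iocIndicator, Fin.sum_univ_four]
  norm_num
  split_ifs <;> grind

lemma iocIndicator_sub_iocIndicator_eq_sum_quarters {N : ℝ} (hN : 0 < N) (a t : ℝ) :
    iocIndicator a (2 / N) t - iocIndicator (a + 2 / N) (2 / N) t =
      ∑ i : Fin 4, pathSign i * iocIndicator (a + i / N) (1 / N) t := by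
  have : 0 < 1 / N := by positivity
  simp only [iocIndicator, Fin.sum_univ_four, pathSign]
  norm_num
  split_ifs <;> grind

lemma haar_two_pow_add {k j : ℕ} (hj : j < 2 ^ k) (t : ℝ) :
    haar (2 ^ k + j) t = iocIndicator (j / 2 ^ k) (1 / 2 ^ (k + 1)) t
      - iocIndicator (j / 2 ^ k + 1 / 2 ^ (k + 1)) (1 / 2 ^ (k + 1)) t := by
  have hlog : Nat.log2 (2 ^ k + j) = k := by
    rw [Nat.log2_eq_log_two]
    exact Nat.log_eq_of_pow_le_of_lt_pow (by omega) (by rw [pow_succ]; omega)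
  have hmid : (2 * (j : ℝ) + 1) / 2 ^ (k + 1) = j / 2 ^ k + 1 / 2 ^ (k + 1) := by
    field_simp; ring
  have hend : ((j : ℝ) + 1) / 2 ^ k = j / 2 ^ k + 1 / 2 ^ (k + 1) + 1 / 2 ^ (k + 1) := by
    field_simp; ring
  rw [haar, if_neg (by positivity)]
  simp only [iocIndicator, hlog, Nat.add_sub_cancel_left, hmid, hend]
  split_ifs <;> grind

lemma haar_four_pow_add {n m : ℕ} (hm : m < 4 ^ n) (t : ℝ) :
    haar (4 ^ n + m) t = iocIndicator (m / 4 ^ n) (2 / 4 ^ (n + 1)) t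
      - iocIndicator (m / 4 ^ n + 2 / 4 ^ (n + 1)) (2 / 4 ^ (n + 1)) t := by
  have h4 : (4 : ℕ) ^ n = 2 ^ (2 * n) := by rw [pow_mul]; norm_num
  have hdiv : (1 : ℝ) / 2 ^ (2 * n + 1) = 2 / 4 ^ (n + 1) := by
    rw [pow_succ, pow_succ, pow_mul]; field_simp; ring
  rw [h4] at hm ⊢
  rw [haar_two_pow_add hm, hdiv]
  norm_num [pow_mul]

def edgeIndex : ∀ n, DE n → ℕ
  | 0, _ => 0
  | n + 1, (e, i) => 4 * edgeIndex n e + i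

lemma edgeIndex_lt : ∀ n (e : DE n), edgeIndex n e < 4 ^ n
  | 0, _ => Nat.one_pos
  | n + 1, (e, i) => by
    have := edgeIndex_lt n e
    simp only [edgeIndex, pow_succ]
    omega

lemma range_edgeIndex : ∀ n, Set.range (edgeIndex n) = Set.Iio (4 ^ n)
  | 0 => by
    ext m
    exact ⟨fun ⟨_, h⟩ => by simp [← h, edgeIndex], fun h => ⟨(), by simp_all [edgeIndex]⟩⟩
  | n + 1 => by
    refine (Set.range_subset_iff.2 (edgeIndex_lt (n + 1))).antisymm fun m hm => ?_
    obtain ⟨e, he⟩ : m / 4 ∈ Set.range (edgeIndex n) := by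
      rw [range_edgeIndex n, Set.mem_Iio]
      rw [Set.mem_Iio, pow_succ] at hm
      omega
    exact ⟨(e, ⟨m % 4, by omega⟩), by simp only [edgeIndex, he]; omega⟩

lemma lep_eq_edgeIndex_div : ∀ n (e : DE n), lep n e = edgeIndex n e / 4 ^ n
  | 0, _ => by simp [lep, edgeIndex]
  | n + 1, (e, i) => by
    rw [lep, edgeIndex, lep_eq_edgeIndex_div n e]
    push_cast
    field_simp
    ring

-- Lets `simp` see the vertices of `D_{n+1}` as a sum type, to decide equalities between them.
attribute [reducible] DV

lemma sum_edges_succ {M : Type*} [AddCommMonoid M] {n : ℕ} (φ : DE (n + 1) → M) :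
    ∑ p, φ p = ∑ e, ∑ i, φ (e, i) :=
  Fintype.sum_prod_type φ

def divergence (n : ℕ) (f : DE n → ℝ) (v : DV n) : ℝ :=
  ∑ e, f e * ((if (ends n e).2 = v then 1 else 0) - (if (ends n e).1 = v then 1 else 0))

lemma mem_cycleSpace_iff {n : ℕ} {f : DE n → ℝ} :
    f ∈ cycleSpace n ↔ ∀ v, divergence n f v = 0 := Iff.rfl

section Succ

variable {n : ℕ} (f : DE (n + 1) → ℝ)

lemma divergence_succ_inl (v : DV n) :
    divergence (n + 1) f (Sum.inl v) = ∑ e, ((f (e, 1) + f (e, 2)) *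
      (if (ends n e).2 = v then 1 else 0) - (f (e, 0) + f (e, 3)) *
      (if (ends n e).1 = v then 1 else 0)) := by
  simp only [divergence, sum_edges_succ]
  refine Finset.sum_congr rfl fun e _ => ?_
  simp [Fin.sum_univ_four, ends]
  split_ifs <;> ring

lemma divergence_succ_inr_zero (e : DE n) :
    divergence (n + 1) f (Sum.inr (e, 0)) = f (e, 0) - f (e, 1) := by
  simp only [divergence, sum_edges_succ]
  simp [Fin.sum_univ_four, ends, Finset.sum_add_distrib]
  ring

lemma divergence_succ_inr_one (e : DE n) :
    divergence (n + 1) f (Sum.inr (e, 1)) = f (e, 3) - f (e, 2) := by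
  simp only [divergence, sum_edges_succ]
  simp [Fin.sum_univ_four, ends, Finset.sum_add_distrib]
  ring

end Succ

noncomputable def refineFlow (n : ℕ) : (DE n → ℝ) →ₗ[ℝ] (DE (n + 1) → ℝ) where
  toFun g p := g p.1 / 4
  map_add' _ _ := by funext; simp [add_div]
  map_smul' _ _ := by funext; simp [mul_div_assoc]

noncomputable def diamondCycles (n : ℕ) : (DE n → ℝ) →ₗ[ℝ] (DE (n + 1) → ℝ) where
  toFun d p := pathSign p.2 * d p.1 / 4 ^ (n + 1)
  map_add' _ _ := by funext; simp [mul_add, add_div]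
  map_smul' _ _ := by funext; simp; ring

lemma refineFlow_mem_cycleSpace_iff {n : ℕ} {g : DE n → ℝ} :
    refineFlow n g ∈ cycleSpace (n + 1) ↔ g ∈ cycleSpace n := by
  have hdiv : ∀ v, divergence (n + 1) (refineFlow n g) (Sum.inl v) = divergence n g v / 2 := by
    intro v
    rw [divergence_succ_inl, divergence, Finset.sum_div]
    refine Finset.sum_congr rfl fun e _ => ?_
    simp only [refineFlow, LinearMap.coe_mk, AddHom.coe_mk]
    ring
  simp only [mem_cycleSpace_iff]
  refine ⟨fun h v => by simpa [hdiv] using h (Sum.inl v), fun h => ?_⟩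
  rintro (v | ⟨e, j⟩)
  · simp [hdiv, h v]
  · fin_cases j
    · simp [divergence_succ_inr_zero, refineFlow]
    · simp [divergence_succ_inr_one, refineFlow]

lemma diamondCycles_mem_cycleSpace {n : ℕ} (d : DE n → ℝ) :
    diamondCycles n d ∈ cycleSpace (n + 1) := by
  rw [mem_cycleSpace_iff]
  rintro (v | ⟨e, j⟩)
  · simp [divergence_succ_inl, diamondCycles, pathSign, neg_div]
  · fin_cases j
    · simp [divergence_succ_inr_zero, diamondCycles, pathSign]
    · simp [divergence_succ_inr_one, diamondCycles, pathSign]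

lemma cycleSpace_succ (n : ℕ) :
    cycleSpace (n + 1) =
      (cycleSpace n).map (refineFlow n) ⊔ LinearMap.range (diamondCycles n) := by
  refine le_antisymm (fun f hf => ?_) (sup_le ?_ ?_)
  · have hpair : ∀ e, f (e, 0) = f (e, 1) ∧ f (e, 2) = f (e, 3) := fun e =>
      ⟨sub_eq_zero.1 ((divergence_succ_inr_zero f e).symm.trans (hf _)),
        (sub_eq_zero.1 ((divergence_succ_inr_one f e).symm.trans (hf _))).symm⟩
    set g : DE n → ℝ := fun e => 2 * (f (e, 0) + f (e, 2))
    set d : DE n → ℝ := fun e => 4 ^ (n + 1) * (f (e, 0) - f (e, 2)) / 2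
    have hfgd : f = refineFlow n g + diamondCycles n d := by
      funext ⟨e, i⟩
      change f (e, i) = refineFlow n g (e, i) + diamondCycles n d (e, i)
      simp only [refineFlow, diamondCycles, LinearMap.coe_mk, AddHom.coe_mk, g, d]
      fin_cases i <;> simp [pathSign, ← (hpair e).1, ← (hpair e).2] <;> field_simp <;> ring
    have hg : g ∈ cycleSpace n := by
      rw [← refineFlow_mem_cycleSpace_iff, eq_sub_of_add_eq hfgd.symm]
      exact sub_mem hf (diamondCycles_mem_cycleSpace d)
    rw [hfgd]
    exact Submodule.add_mem_sup ⟨g, hg, rfl⟩ ⟨d, rfl⟩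
  · exact Submodule.map_le_iff_le_comap.2 fun g => refineFlow_mem_cycleSpace_iff.2
  · rintro _ ⟨d, rfl⟩
    exact diamondCycles_mem_cycleSpace d

lemma cycleSpace_zero : cycleSpace 0 = ⊥ := by
  refine eq_bot_iff.2 fun f hf => funext fun e => ?_
  have h : divergence 0 f 0 = 0 := hf 0
  rw [divergence, Fintype.sum_eq_single e fun e' he' => (he' rfl).elim] at h
  simpa [ends] using h

noncomputable def embₗ (n : ℕ) : (DE n → ℝ) →ₗ[ℝ] (ℝ → ℝ) where
  toFun := emb n
  map_add' f g := by funext t; simp only [emb, Pi.add_apply, add_mul, Finset.sum_add_distrib]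
  map_smul' c f := by
    funext t
    simp only [emb, Pi.smul_apply, smul_eq_mul, RingHom.id_apply, Finset.mul_sum, mul_assoc]

lemma emb_apply (n : ℕ) (f : DE n → ℝ) (t : ℝ) :
    emb n f t = ∑ e, f e * (4 ^ n * iocIndicator (lep n e) (1 / 4 ^ n) t) := rfl

lemma emb_refineFlow {n : ℕ} (g : DE n → ℝ) : emb (n + 1) (refineFlow n g) = emb n g := by
  funext t
  rw [emb_apply, emb_apply, sum_edges_succ]
  refine Finset.sum_congr rfl fun e _ => ?_
  rw [show (1 : ℝ) / 4 ^ n = 4 / 4 ^ (n + 1) by rw [pow_succ]; field_simp,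
    iocIndicator_eq_sum_quarters (by positivity), Finset.mul_sum, Finset.mul_sum]
  refine Finset.sum_congr rfl fun i _ => ?_
  simp only [refineFlow, LinearMap.coe_mk, AddHom.coe_mk, lep, pow_succ]
  ring

lemma emb_diamondCycles {n : ℕ} (d : DE n → ℝ) :
    emb (n + 1) (diamondCycles n d) = ∑ e, d e • haar (4 ^ n + edgeIndex n e) := by
  funext t
  rw [emb_apply, sum_edges_succ, Finset.sum_apply]
  refine Finset.sum_congr rfl fun e _ => ?_
  rw [Pi.smul_apply, smul_eq_mul, haar_four_pow_add (edgeIndex_lt n e), ← lep_eq_edgeIndex_div,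
    iocIndicator_sub_iocIndicator_eq_sum_quarters (by positivity), Finset.mul_sum]
  refine Finset.sum_congr rfl fun i _ => ?_
  simp only [diamondCycles, LinearMap.coe_mk, AddHom.coe_mk, lep]
  field_simp

lemma range_haar_four_pow_add_edgeIndex (n : ℕ) :
    Set.range (fun e => haar (4 ^ n + edgeIndex n e)) = haarLevel (2 * n) := by
  have h4 : (4 : ℕ) ^ n = 2 ^ (2 * n) := by rw [pow_mul]; norm_num
  ext h
  simp only [haarLevel, Set.mem_range, Set.mem_image, Set.mem_Ico]
  constructor
  · rintro ⟨e, rfl⟩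
    have := edgeIndex_lt n e
    exact ⟨_, ⟨by omega, by rw [pow_succ]; omega⟩, rfl⟩
  · rintro ⟨i, ⟨hi₁, hi₂⟩, rfl⟩
    obtain ⟨e, he⟩ : i - 4 ^ n ∈ Set.range (edgeIndex n) := by
      rw [range_edgeIndex, Set.mem_Iio]; rw [pow_succ] at hi₂; omega
    exact ⟨e, by rw [he]; congr; omega⟩

lemma map_embₗ_cycleSpace : ∀ n, (cycleSpace n).map (embₗ n) =
    Submodule.span ℝ (⋃ k ∈ Finset.range n, haarLevel (2 * k))
  | 0 => by simp [cycleSpace_zero]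
  | n + 1 => by
    have hrefine : (embₗ (n + 1)).comp (refineFlow n) = embₗ n :=
      LinearMap.ext emb_refineFlow
    have hcycles : (embₗ (n + 1)).comp (diamondCycles n) =
        Fintype.linearCombination ℝ fun e => haar (4 ^ n + edgeIndex n e) :=
      LinearMap.ext fun d => by
        rw [Fintype.linearCombination_apply]; exact emb_diamondCycles d
    rw [cycleSpace_succ, Submodule.map_sup, ← Submodule.map_comp, ← LinearMap.range_comp,
      hrefine, hcycles, map_embₗ_cycleSpace n, Fintype.range_linearCombination,
      range_haar_four_pow_add_edgeIndex, Finset.range_add_one, Finset.set_biUnion_insert,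
      Submodule.span_union, sup_comm]

/-- under the identification `emb n`, the cycle space `Z(D_n)` corresponds
exactly to the span of the even levels of the Haar system. -/
theorem stmt14 (n : ℕ) :
    emb n '' (cycleSpace n : Set (DE n → ℝ)) =
      (Submodule.span ℝ (⋃ k ∈ Finset.range n, haarLevel (2 * k)) : Set (ℝ → ℝ)) := by
  rw [← map_embₗ_cycleSpace, Submodule.map_coe]
  rfl
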